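/- Let r ≤ m and let V_I be a 2m×r complex matrix such that the 2m×2r matrix [V_I, Σ_{2m}V_I^#] satisfies [V_I, Σ_{2m}V_I^#]†·J_{2m}·[V_I, Σ_{2m}V_I^#] = J_{2r} (i.e., its columns are J-orthonormal with the first r of J-norm square +1 and the last r of J-norm square −1). Then there exists a 2m×(m−r) complex matrix V_{II} such that the 2m×2m matrix V = [[V_I, V_{II}], Σ_{2m}·[V_I, V_{II}]^#] (the horizontal concatenation of V_I, V_{II}, Σ_{2m}V_I^#, Σ_{2m}V_{II}^#) is Bogoliubov. -/

import Mathlib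

open Matrix

noncomputable section

/-- The Krein-space metric `J_{2k} = diag(I_k, -I_k)`. -/
def Jmat (k : ℕ) : Matrix (Fin k ⊕ Fin k) (Fin k ⊕ Fin k) ℂ :=
  Matrix.fromBlocks 1 0 0 (-1)

/-- The block-swap matrix `Σ_{2k} = [[0, I_k],[I_k, 0]]`. -/
def Sig (k : ℕ) : Matrix (Fin k ⊕ Fin k) (Fin k ⊕ Fin k) ℂ :=
  Matrix.fromBlocks 0 1 1 0

/-- A `2r × 2s` complex matrix is doubled-up if `Σ_{2r} X Σ_{2s} = X^#`. -/
def DoubledUp {r s : ℕ} (X : Matrix (Fin r ⊕ Fin r) (Fin s ⊕ Fin s) ℂ) : Prop :=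
  Sig r * X * Sig s = X.map (starRingEnd ℂ)

/-- The ♭-adjoint `X^♭ = J_{2s} X† J_{2r}` of a `2r × 2s` complex matrix. -/
def flatAdj {r s : ℕ} (X : Matrix (Fin r ⊕ Fin r) (Fin s ⊕ Fin s) ℂ) :
    Matrix (Fin s ⊕ Fin s) (Fin r ⊕ Fin r) ℂ :=
  Jmat s * Xᴴ * Jmat r

/-- A `2k × 2k` complex matrix is Bogoliubov if it is doubled-up and ♭-unitary. -/
def Bogoliubov {k : ℕ} (R : Matrix (Fin k ⊕ Fin k) (Fin k ⊕ Fin k) ℂ) : Prop :=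
  DoubledUp R ∧ R * flatAdj R = 1 ∧ flatAdj R * R = 1

/-!
Write `⟨x, y⟩_J = x† J y` and `C v = Σ v^#`. The map `C` is a conjugate-linear involution with
`⟨C x, C y⟩_J = -conj ⟨x, y⟩_J` and `⟨x, C x⟩_J = 0`, so the columns of `[X, Σ X^#]` are
`J`-orthonormal (signs `+1` on `X`, `-1` on `Σ X^#`) as soon as `X† J X = 1` and `X† J Σ X^# = 0`.

Such an `X` with `k < m` columns can be extended by one column. The `J`-orthogonal complement `K`
of the `2k` columns of `[X, Σ X^#]` is nonzero by counting dimensions, `C`-invariant, and `J` is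
nondegenerate on it because the Gram matrix of `[X, Σ X^#]` is invertible. By polarization some
`u ∈ K` has `⟨u, u⟩_J ≠ 0`; replacing `u` by `C u` if needed and rescaling gives `⟨u, u⟩_J = 1`.
After `m - r` steps the matrix `V = [C, Σ C^#]` satisfies `V† J V = J`, i.e. `V^♭ V = 1`, and it is
doubled-up by construction.
-/

section

variable {m : ℕ} {κ ι : Type*}

lemma Jmat_conjTranspose : (Jmat m)ᴴ = Jmat m := by
  simp [Jmat, fromBlocks_conjTranspose]

lemma Jmat_mul_Jmat : Jmat m * Jmat m = 1 := by
  simp [Jmat, fromBlocks_multiply, fromBlocks_one]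

lemma Sig_mul_Sig : Sig m * Sig m = 1 := by
  simp [Sig, fromBlocks_multiply, fromBlocks_one]

lemma Sig_map_conj : (Sig m).map (starRingEnd ℂ) = Sig m := by
  simp [Sig, fromBlocks_map]

lemma Jmat_mulVec (v : Fin m ⊕ Fin m → ℂ) :
    Jmat m *ᵥ v = Sum.elim (v ∘ Sum.inl) (-(v ∘ Sum.inr)) := by
  ext (i | i) <;> simp [Jmat, fromBlocks_mulVec, neg_mulVec]

lemma Sig_mulVec (v : Fin m ⊕ Fin m → ℂ) : Sig m *ᵥ v = Sum.elim (v ∘ Sum.inr) (v ∘ Sum.inl) := by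
  ext (i | i) <;> simp [Sig, fromBlocks_mulVec]

def jInner (x y : Fin m ⊕ Fin m → ℂ) : ℂ := star x ⬝ᵥ (Jmat m *ᵥ y)

def sigConjVec (v : Fin m ⊕ Fin m → ℂ) : Fin m ⊕ Fin m → ℂ := Sig m *ᵥ star v

lemma jInner_eq_sum (x y : Fin m ⊕ Fin m → ℂ) :
    jInner x y = ∑ i, (star (x (.inl i)) * y (.inl i) - star (x (.inr i)) * y (.inr i)) := by
  simp [jInner, Jmat_mulVec, dotProduct, Fintype.sum_sum_type, sub_eq_add_neg,
    Finset.sum_add_distrib]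

lemma star_jInner (x y : Fin m ⊕ Fin m → ℂ) : star (jInner x y) = jInner y x := by
  simp [jInner_eq_sum, star_sum, mul_comm]

lemma jInner_add_left (x y z : Fin m ⊕ Fin m → ℂ) :
    jInner (x + y) z = jInner x z + jInner y z := by
  simp [jInner, add_dotProduct]

lemma jInner_add_right (x y z : Fin m ⊕ Fin m → ℂ) :
    jInner x (y + z) = jInner x y + jInner x z := by
  simp [jInner, mulVec_add, dotProduct_add]

lemma jInner_smul_left (c : ℂ) (x y : Fin m ⊕ Fin m → ℂ) :
    jInner (c • x) y = star c * jInner x y := by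
  simp [jInner, smul_dotProduct]

lemma jInner_smul_right (c : ℂ) (x y : Fin m ⊕ Fin m → ℂ) :
    jInner x (c • y) = c * jInner x y := by
  simp [jInner, mulVec_smul, dotProduct_smul]

lemma sigConjVec_sigConjVec (v : Fin m ⊕ Fin m → ℂ) : sigConjVec (sigConjVec v) = v := by
  ext (i | i) <;> simp [sigConjVec, Sig_mulVec]

lemma jInner_sigConjVec (x y : Fin m ⊕ Fin m → ℂ) :
    jInner (sigConjVec x) (sigConjVec y) = -star (jInner x y) := by
  simp [jInner_eq_sum, sigConjVec, Sig_mulVec, star_sum]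

lemma jInner_self_sigConjVec (x : Fin m ⊕ Fin m → ℂ) : jInner x (sigConjVec x) = 0 := by
  simp [jInner_eq_sum, sigConjVec, Sig_mulVec, mul_comm]

lemma exists_jInner_self_ne_zero {K : Submodule ℂ (Fin m ⊕ Fin m → ℂ)} {v w : Fin m ⊕ Fin m → ℂ}
    (hv : v ∈ K) (hw : w ∈ K) (hvw : jInner v w ≠ 0) : ∃ u ∈ K, jInner u u ≠ 0 := by
  by_contra! h
  have hsum := h (v + w) (K.add_mem hv hw)
  have hdiff := h (v + Complex.I • w) (K.add_mem hv (K.smul_mem _ hw))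
  simp only [jInner_add_left, jInner_add_right, jInner_smul_left, jInner_smul_right,
    h v hv, h w hw, Complex.star_def, Complex.conj_I] at hsum hdiff
  -- polarization: the two identities give `⟨v, w⟩ + ⟨w, v⟩ = 0` and `⟨v, w⟩ - ⟨w, v⟩ = 0`
  apply hvw
  linear_combination (hsum - Complex.I * hdiff) / 2 + (jInner v w - jInner w v) / 2 * Complex.I_sq

lemma exists_smul_jInner_self_eq_one {u : Fin m ⊕ Fin m → ℂ} {t : ℝ} (ht : 0 < t)
    (hu : jInner u u = t) : ∃ c : ℂ, jInner (c • u) (c • u) = 1 := by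
  refine ⟨((√t)⁻¹ : ℝ), ?_⟩
  rw [jInner_smul_left, jInner_smul_right, hu, Complex.star_def, Complex.conj_ofReal]
  norm_cast
  field_simp
  rw [Real.sq_sqrt ht.le]

lemma exists_jInner_self_eq_one {K : Submodule ℂ (Fin m ⊕ Fin m → ℂ)}
    (hK : ∀ v ∈ K, sigConjVec v ∈ K) {u : Fin m ⊕ Fin m → ℂ} (hu : u ∈ K)
    (hu0 : jInner u u ≠ 0) : ∃ v ∈ K, jInner v v = 1 := by
  obtain ⟨t, ht⟩ : ∃ t : ℝ, jInner u u = t :=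
    ⟨_, (Complex.conj_eq_iff_re.mp (star_jInner u u)).symm⟩
  have ht0 : t ≠ 0 := by rintro rfl; exact hu0 (by simpa using ht)
  rcases ht0.lt_or_gt with hneg | hpos
  · obtain ⟨c, hc⟩ := exists_smul_jInner_self_eq_one (neg_pos.mpr hneg) (u := sigConjVec u)
      (by rw [jInner_sigConjVec, star_jInner, ht]; push_cast; rfl)
    exact ⟨c • sigConjVec u, K.smul_mem c (hK u hu), hc⟩
  · obtain ⟨c, hc⟩ := exists_smul_jInner_self_eq_one hpos ht
    exact ⟨c • u, K.smul_mem c hu, hc⟩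

def sigConj (X : Matrix (Fin m ⊕ Fin m) κ ℂ) : Matrix (Fin m ⊕ Fin m) κ ℂ :=
  Sig m * X.map (starRingEnd ℂ)

def doubleUp (X : Matrix (Fin m ⊕ Fin m) κ ℂ) : Matrix (Fin m ⊕ Fin m) (κ ⊕ κ) ℂ :=
  fromCols X (sigConj X)

lemma transpose_sigConj_apply (X : Matrix (Fin m ⊕ Fin m) κ ℂ) (i : κ) :
    (sigConj X)ᵀ i = sigConjVec (Xᵀ i) := rfl

lemma sigConj_sigConj (X : Matrix (Fin m ⊕ Fin m) κ ℂ) : sigConj (sigConj X) = X := by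
  ext a i
  exact congrFun (sigConjVec_sigConjVec (Xᵀ i)) a

lemma sigConj_fromCols (X : Matrix (Fin m ⊕ Fin m) κ ℂ) (Y : Matrix (Fin m ⊕ Fin m) ι ℂ) :
    sigConj (fromCols X Y) = fromCols (sigConj X) (sigConj Y) := by
  ext a (i | i) <;> rfl

lemma sigConj_submatrix (X : Matrix (Fin m ⊕ Fin m) κ ℂ) (e : ι → κ) :
    sigConj (X.submatrix id e) = (sigConj X).submatrix id e := rfl

lemma gram_apply (X : Matrix (Fin m ⊕ Fin m) κ ℂ) (Y : Matrix (Fin m ⊕ Fin m) ι ℂ) (i : κ) (j : ι) :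
    (Xᴴ * Jmat m * Y) i j = jInner (Xᵀ i) (Yᵀ j) := by
  rw [Matrix.mul_assoc, mul_apply]
  rfl

lemma conjTranspose_gram (X : Matrix (Fin m ⊕ Fin m) κ ℂ) (Y : Matrix (Fin m ⊕ Fin m) ι ℂ) :
    (Xᴴ * Jmat m * Y)ᴴ = Yᴴ * Jmat m * X := by
  ext i j
  rw [conjTranspose_apply, gram_apply, gram_apply, star_jInner]

lemma gram_sigConj (X : Matrix (Fin m ⊕ Fin m) κ ℂ) (Y : Matrix (Fin m ⊕ Fin m) ι ℂ) :
    (sigConj X)ᴴ * Jmat m * sigConj Y = -(Xᴴ * Jmat m * Y).map (starRingEnd ℂ) := by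
  ext i j
  rw [gram_apply, transpose_sigConj_apply, transpose_sigConj_apply, jInner_sigConjVec,
    neg_apply, map_apply, gram_apply]
  rfl

lemma gram_fromCols {κ' ι' : Type*} (X : Matrix (Fin m ⊕ Fin m) κ ℂ)
    (X' : Matrix (Fin m ⊕ Fin m) κ' ℂ) (Y : Matrix (Fin m ⊕ Fin m) ι ℂ)
    (Y' : Matrix (Fin m ⊕ Fin m) ι' ℂ) :
    (fromCols X X')ᴴ * Jmat m * fromCols Y Y' =
      fromBlocks (Xᴴ * Jmat m * Y) (Xᴴ * Jmat m * Y') (X'ᴴ * Jmat m * Y) (X'ᴴ * Jmat m * Y') := by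
  rw [conjTranspose_fromCols_eq_fromRows_conjTranspose, fromRows_mul, fromRows_mul_fromCols]

lemma gram_submatrix (X : Matrix (Fin m ⊕ Fin m) κ ℂ) (Y : Matrix (Fin m ⊕ Fin m) κ ℂ) (e : ι → κ) :
    (X.submatrix id e)ᴴ * Jmat m * Y.submatrix id e = (Xᴴ * Jmat m * Y).submatrix e e := by
  ext i j
  simp only [gram_apply, submatrix_apply]
  rfl

def IsDoubledJOrthonormal [DecidableEq κ] (X : Matrix (Fin m ⊕ Fin m) κ ℂ) : Prop :=
  Xᴴ * Jmat m * X = 1 ∧ Xᴴ * Jmat m * sigConj X = 0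

lemma isDoubledJOrthonormal_iff_gram [DecidableEq κ] (X : Matrix (Fin m ⊕ Fin m) κ ℂ) :
    IsDoubledJOrthonormal X ↔ (doubleUp X)ᴴ * Jmat m * doubleUp X = fromBlocks 1 0 0 (-1) := by
  rw [doubleUp, gram_fromCols, gram_sigConj, ← conjTranspose_gram X (sigConj X)]
  constructor
  · rintro ⟨h₁, h₂⟩
    rw [h₁, h₂]
    simp
  · intro h
    obtain ⟨h₁, h₂, -, -⟩ := fromBlocks_inj.mp h
    exact ⟨h₁, h₂⟩

lemma IsDoubledJOrthonormal.submatrix [DecidableEq κ] [DecidableEq ι]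
    {X : Matrix (Fin m ⊕ Fin m) κ ℂ} (hX : IsDoubledJOrthonormal X) (e : ι ≃ κ) :
    IsDoubledJOrthonormal (X.submatrix id e) := by
  rw [IsDoubledJOrthonormal, sigConj_submatrix, gram_submatrix, gram_submatrix, hX.1, hX.2]
  exact ⟨submatrix_one_equiv e, rfl⟩

def jOrth (X : Matrix (Fin m ⊕ Fin m) κ ℂ) : Submodule ℂ (Fin m ⊕ Fin m → ℂ) :=
  LinearMap.ker (Xᴴ * Jmat m).mulVecLin

lemma mem_jOrth_iff_mulVec {X : Matrix (Fin m ⊕ Fin m) κ ℂ} {v : Fin m ⊕ Fin m → ℂ} :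
    v ∈ jOrth X ↔ (Xᴴ * Jmat m) *ᵥ v = 0 :=
  Iff.rfl

lemma mem_jOrth {X : Matrix (Fin m ⊕ Fin m) κ ℂ} {v : Fin m ⊕ Fin m → ℂ} :
    v ∈ jOrth X ↔ ∀ i, jInner (Xᵀ i) v = 0 := by
  rw [mem_jOrth_iff_mulVec, ← mulVec_mulVec, funext_iff]
  rfl

lemma mem_jOrth_fromCols {X : Matrix (Fin m ⊕ Fin m) κ ℂ} {Y : Matrix (Fin m ⊕ Fin m) ι ℂ}
    {v : Fin m ⊕ Fin m → ℂ} : v ∈ jOrth (fromCols X Y) ↔ v ∈ jOrth X ∧ v ∈ jOrth Y := by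
  simp only [mem_jOrth, Sum.forall]
  rfl

lemma sigConjVec_mem_jOrth_sigConj {X : Matrix (Fin m ⊕ Fin m) κ ℂ} {v : Fin m ⊕ Fin m → ℂ}
    (hv : v ∈ jOrth X) : sigConjVec v ∈ jOrth (sigConj X) := by
  rw [mem_jOrth] at hv ⊢
  intro i
  rw [transpose_sigConj_apply, jInner_sigConjVec, hv i, star_zero, neg_zero]

lemma sigConjVec_mem_jOrth_doubleUp {X : Matrix (Fin m ⊕ Fin m) κ ℂ} {v : Fin m ⊕ Fin m → ℂ}
    (hv : v ∈ jOrth (doubleUp X)) : sigConjVec v ∈ jOrth (doubleUp X) := by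
  rw [doubleUp, mem_jOrth_fromCols] at hv ⊢
  refine ⟨?_, sigConjVec_mem_jOrth_sigConj hv.1⟩
  simpa only [sigConj_sigConj] using sigConjVec_mem_jOrth_sigConj hv.2

lemma gram_replicateCol_of_mem_jOrth {X : Matrix (Fin m ⊕ Fin m) κ ℂ} {v : Fin m ⊕ Fin m → ℂ}
    (hv : v ∈ jOrth X) : Xᴴ * Jmat m * replicateCol ι v = 0 := by
  rw [← replicateCol_mulVec, mem_jOrth_iff_mulVec.mp hv, replicateCol_zero]

lemma jOrth_ne_bot [Fintype κ] (X : Matrix (Fin m ⊕ Fin m) κ ℂ) (h : Fintype.card κ < 2 * m) :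
    jOrth X ≠ ⊥ :=
  LinearMap.ker_ne_bot_of_finrank_lt (by simpa [two_mul] using h)

open scoped ComplexOrder in
lemma exists_mem_jOrth_jInner_ne_zero [Fintype κ] [DecidableEq κ] {X : Matrix (Fin m ⊕ Fin m) κ ℂ}
    {N : Matrix κ κ ℂ} (hN : Xᴴ * Jmat m * X * N = 1) {v : Fin m ⊕ Fin m → ℂ}
    (hv : v ∈ jOrth X) (hv0 : v ≠ 0) : ∃ w ∈ jOrth X, jInner v w ≠ 0 := by
  have hXv : (Xᴴ * Jmat m) *ᵥ v = 0 := mem_jOrth_iff_mulVec.mp hv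
  -- `w` is the `J`-orthogonal projection of `J v` onto `jOrth X`
  refine ⟨Jmat m *ᵥ v - X *ᵥ (N *ᵥ (Xᴴ *ᵥ v)), ?_, ?_⟩
  · rw [mem_jOrth_iff_mulVec, mulVec_sub]
    simp only [mulVec_mulVec, ← Matrix.mul_assoc]
    rw [hN, Matrix.mul_assoc, Jmat_mul_Jmat, Matrix.mul_one, Matrix.one_mul, sub_self]
  · have hvJX : star v ᵥ* (Jmat m * X) = 0 := by
      rw [← star_star (star v ᵥ* _), star_vecMul, star_star, conjTranspose_mul, Jmat_conjTranspose,
        hXv, star_zero]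
    rw [jInner, mulVec_sub, dotProduct_sub, mulVec_mulVec, Jmat_mul_Jmat, one_mulVec, mulVec_mulVec,
      dotProduct_mulVec, hvJX, zero_dotProduct, sub_zero]
    exact mt dotProduct_star_self_eq_zero.mp hv0

lemma gram_replicateCol (u v : Fin m ⊕ Fin m → ℂ) :
    (replicateCol ι u)ᴴ * Jmat m * replicateCol ι v = of fun _ _ => jInner u v := by
  ext i j
  rw [gram_apply]
  rfl

lemma sigConj_replicateCol (u : Fin m ⊕ Fin m → ℂ) :
    sigConj (replicateCol ι u) = replicateCol ι (sigConjVec u) := rfl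

lemma IsDoubledJOrthonormal.fromCols_replicateCol [DecidableEq κ] {F : Matrix (Fin m ⊕ Fin m) κ ℂ}
    (hF : IsDoubledJOrthonormal F) {u : Fin m ⊕ Fin m → ℂ} (hu : u ∈ jOrth (doubleUp F))
    (huu : jInner u u = 1) : IsDoubledJOrthonormal (fromCols F (replicateCol (Fin 1) u)) := by
  obtain ⟨huF, huσF⟩ := mem_jOrth_fromCols.mp hu
  obtain ⟨hσuF, -⟩ := mem_jOrth_fromCols.mp (sigConjVec_mem_jOrth_doubleUp hu)
  constructor
  · rw [gram_fromCols, hF.1, gram_replicateCol_of_mem_jOrth huF, ← conjTranspose_gram,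
      gram_replicateCol_of_mem_jOrth huF, conjTranspose_zero, gram_replicateCol, huu,
      ← fromBlocks_one]
    congr
    ext i j
    obtain rfl := Subsingleton.elim i j
    simp
  · rw [sigConj_fromCols, sigConj_replicateCol, gram_fromCols, hF.2,
      gram_replicateCol_of_mem_jOrth hσuF, ← conjTranspose_gram,
      gram_replicateCol_of_mem_jOrth huσF, conjTranspose_zero, gram_replicateCol,
      jInner_self_sigConjVec]
    exact fromBlocks_zero

lemma exists_isDoubledJOrthonormal_fromCols_replicateCol [Fintype κ] [DecidableEq κ]
    {F : Matrix (Fin m ⊕ Fin m) κ ℂ} (hF : IsDoubledJOrthonormal F) (hκ : Fintype.card κ < m) :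
    ∃ u, IsDoubledJOrthonormal (fromCols F (replicateCol (Fin 1) u)) := by
  have hgram := (isDoubledJOrthonormal_iff_gram F).mp hF
  obtain ⟨v, hv, hv0⟩ := (Submodule.ne_bot_iff _).mp
    (jOrth_ne_bot (doubleUp F) (by rw [Fintype.card_sum]; omega))
  obtain ⟨w, hw, hvw⟩ := exists_mem_jOrth_jInner_ne_zero
    (N := fromBlocks 1 0 0 (-1)) (by rw [hgram]; simp [fromBlocks_multiply, fromBlocks_one]) hv hv0
  obtain ⟨u₀, hu₀, hu₀0⟩ := exists_jInner_self_ne_zero hv hw hvw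
  obtain ⟨u, hu, huu⟩ := exists_jInner_self_eq_one (fun _ => sigConjVec_mem_jOrth_doubleUp) hu₀ hu₀0
  exact ⟨u, hF.fromCols_replicateCol hu huu⟩

lemma exists_isDoubledJOrthonormal_fromCols [Fintype κ] [DecidableEq κ]
    {F : Matrix (Fin m ⊕ Fin m) κ ℂ} (hF : IsDoubledJOrthonormal F) :
    ∀ n, Fintype.card κ + n ≤ m → ∃ W : Matrix (Fin m ⊕ Fin m) (Fin n) ℂ,
      IsDoubledJOrthonormal (fromCols F W)
  | 0, _ => ⟨0, by
    convert hF.submatrix (Equiv.sumEmpty κ (Fin 0)) using 1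
    ext a (i | i)
    · rfl
    · exact i.elim0⟩
  | n + 1, hn => by
    obtain ⟨W, hW⟩ := exists_isDoubledJOrthonormal_fromCols hF n (by omega)
    obtain ⟨u, hu⟩ := exists_isDoubledJOrthonormal_fromCols_replicateCol hW
      (by rw [Fintype.card_sum, Fintype.card_fin]; omega)
    refine ⟨(fromCols W (replicateCol (Fin 1) u)).submatrix id finSumFinEquiv.symm, ?_⟩
    convert hu.submatrix ((Equiv.sumCongr (Equiv.refl κ) finSumFinEquiv.symm).trans
      (Equiv.sumAssoc κ (Fin n) (Fin 1)).symm) using 1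
    ext a (i | j)
    · rfl
    · obtain ⟨k, rfl⟩ := finSumFinEquiv.surjective j
      rcases k with k | k <;> simp

lemma doubledUp_doubleUp {s : ℕ} (C : Matrix (Fin m ⊕ Fin m) (Fin s) ℂ) :
    DoubledUp (doubleUp C) := by
  have hσ : (sigConj C).map (starRingEnd ℂ) = Sig m * C := by
    rw [sigConj, Matrix.map_mul, Sig_map_conj, Matrix.map_map]
    congr 1
    ext
    simp
  rw [DoubledUp, doubleUp, fromCols_map, hσ, mul_fromCols, sigConj, ← Matrix.mul_assoc, Sig_mul_Sig,
    Matrix.one_mul, show Sig s = fromBlocks 0 1 1 0 from rfl, fromCols_mul_fromBlocks]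
  simp

lemma bogoliubov_doubleUp {C : Matrix (Fin m ⊕ Fin m) (Fin m) ℂ} (hC : IsDoubledJOrthonormal C) :
    Bogoliubov (doubleUp C) := by
  have hflat : flatAdj (doubleUp C) * doubleUp C = 1 := by
    rw [flatAdj, Matrix.mul_assoc, Matrix.mul_assoc, ← Matrix.mul_assoc _ (Jmat m),
      (isDoubledJOrthonormal_iff_gram C).mp hC]
    exact Jmat_mul_Jmat
  exact ⟨doubledUp_doubleUp C, mul_eq_one_comm.mpr hflat, hflat⟩

end

/-- Completion of a J-orthonormal doubled-up family to a Bogoliubov matrix: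
if the columns of `A = [V_I, Σ V_I^#]` are J-orthonormal
(`A† J_{2m} A = J_{2r}`), then there is a `2m × (m − r)` matrix `V_II` such
that `V = [[V_I, V_II], Σ[V_I, V_II]^#]` is Bogoliubov. -/
theorem bogoliubov_completion (m r : ℕ) (hr : r ≤ m)
    (VI : Matrix (Fin m ⊕ Fin m) (Fin r) ℂ)
    (A : Matrix (Fin m ⊕ Fin m) (Fin r ⊕ Fin r) ℂ)
    (hA : A = Matrix.of fun a b => Sum.elim (fun j => VI a j)
      (fun j => (Sig m * VI.map (starRingEnd ℂ)) a j) b)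
    (horth : Aᴴ * Jmat m * A = Jmat r) :
    ∃ (VII : Matrix (Fin m ⊕ Fin m) (Fin (m - r)) ℂ)
      (C : Matrix (Fin m ⊕ Fin m) (Fin m) ℂ)
      (V : Matrix (Fin m ⊕ Fin m) (Fin m ⊕ Fin m) ℂ),
      C = Matrix.of (fun a j => Sum.elim (fun j' => VI a j') (fun j' => VII a j')
        ((finSumFinEquiv.trans (finCongr (Nat.add_sub_cancel' hr))).symm j)) ∧
      V = Matrix.of (fun a b => Sum.elim (fun j => C a j)
        (fun j => (Sig m * C.map (starRingEnd ℂ)) a j) b) ∧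
      Bogoliubov V := by
  subst hA
  have hVI : IsDoubledJOrthonormal VI := (isDoubledJOrthonormal_iff_gram VI).mpr horth
  obtain ⟨VII, hVII⟩ := exists_isDoubledJOrthonormal_fromCols hVI (m - r)
    (by rw [Fintype.card_fin]; omega)
  let C := (fromCols VI VII).submatrix id
    (finSumFinEquiv.trans (finCongr (Nat.add_sub_cancel' hr))).symm
  exact ⟨VII, C, doubleUp C, rfl, rfl, bogoliubov_doubleUp (hVII.submatrix _)⟩
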